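/- Let X be a real Banach space, Y a real Banach space, and Z a real normed space. Let T : X → Y be an injective continuous linear map and ι : X → Z a compact continuous linear map, and suppose there is a constant C₁ > 0 such that ‖v‖_X ≤ C₁(‖T v‖_Y + ‖ι v‖_Z) for all v ∈ X. Suppose furthermore that there is a subset D ⊆ Y that is dense in Y and contained in the range of T. Then T is bijective with continuous inverse: there is a continuous linear map S : Y → X with S ∘ T = id_X and T ∘ S = id_Y. -/

import Mathlib

/-!
The estimate says that `v ↦ (T v, ι v)` is antilipschitz. If `T` itself were not, there would be
unit vectors `uₙ` with `T uₙ → 0`; compactness of `ι` yields a subsequence along which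
`(T uₙ, ι uₙ)` converges, hence so does `uₙ`, to a unit vector in the kernel of `T`. Thus `T` is
antilipschitz, so its range is closed and, being dense, all of `Y`; the inverse is continuous by
the open mapping theorem.
-/

open Filter Topology Function Metric

namespace ContinuousLinearMap

variable {𝕜 X Y Z : Type*} [RCLike 𝕜]
  [NormedAddCommGroup X] [NormedSpace 𝕜 X]
  [NormedAddCommGroup Y] [NormedSpace 𝕜 Y]
  [NormedAddCommGroup Z] [NormedSpace 𝕜 Z]

theorem exists_norm_eq_one_tendsto_zero_of_not_antilipschitz (T : X →L[𝕜] Y)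
    (hT : ∀ K, ¬AntilipschitzWith K T) :
    ∃ u : ℕ → X, (∀ n, ‖u n‖ = 1) ∧ Tendsto (T ∘ u) atTop (𝓝 0) := by
  have h : ∀ n : ℕ, ∃ u : X, ‖u‖ = 1 ∧ ‖T u‖ ≤ 1 / (n + 1) := by
    intro n
    by_contra! h
    refine hT (n + 1) (antilipschitz_of_bound_of_norm_one T fun x hx => ?_)
    push_cast
    exact ((div_lt_iff₀' (by positivity)).1 (h x hx)).le
  choose u hu hTu using h
  exact ⟨u, hu, squeeze_zero_norm hTu tendsto_one_div_add_atTop_nhds_zero_nat⟩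

theorem antilipschitzWith_prod_of_norm_le_mul_add (T : X →L[𝕜] Y) (ι : X →L[𝕜] Z) {C : ℝ}
    (hest : ∀ v, ‖v‖ ≤ C * (‖T v‖ + ‖ι v‖)) :
    AntilipschitzWith (2 * C.toNNReal) (T.prod ι) :=
  (T.prod ι).antilipschitz_of_bound fun v => calc
    ‖v‖ ≤ C * (‖T v‖ + ‖ι v‖) := hest v
    _ ≤ C.toNNReal * (‖T v‖ + ‖ι v‖) := by gcongr; exact C.le_coe_toNNReal
    _ ≤ C.toNNReal * (‖T.prod ι v‖ + ‖T.prod ι v‖) := by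
      gcongr
      · exact _root_.norm_fst_le (T.prod ι v)
      · exact _root_.norm_snd_le (T.prod ι v)
    _ = (2 * C.toNNReal : NNReal) * ‖T.prod ι v‖ := by push_cast; ring

theorem exists_antilipschitzWith_of_isCompactOperator [CompleteSpace X] (T : X →L[𝕜] Y)
    (hT : Injective T) (ι : X →L[𝕜] Z) (hι : IsCompactOperator ι) {K : NNReal}
    (hK : AntilipschitzWith K (T.prod ι)) : ∃ K', AntilipschitzWith K' T := by
  by_contra! h
  obtain ⟨u, hu, hTu⟩ := T.exists_norm_eq_one_tendsto_zero_of_not_antilipschitz h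
  have hu_mem : ∀ n, ι (u n) ∈ closure (ι '' closedBall 0 1) := fun n =>
    subset_closure ⟨u n, by simp [hu n], rfl⟩
  obtain ⟨z, -, φ, hφ, hιu⟩ := (hι.isCompact_closure_image_closedBall 1).tendsto_subseq hu_mem
  have hPu : Tendsto (T.prod ι ∘ u ∘ φ) atTop (𝓝 (0, z)) :=
    (hTu.comp hφ.tendsto_atTop).prodMk_nhds hιu
  obtain ⟨x, hx⟩ : (0, z) ∈ Set.range (T.prod ι) :=
    (hK.isClosed_range (T.prod ι).uniformContinuous).mem_of_tendsto hPu
      (Eventually.of_forall fun n => Set.mem_range_self _)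
  have hux : Tendsto (u ∘ φ) atTop (𝓝 x) :=
    ((hK.isUniformInducing (T.prod ι).uniformContinuous).isInducing.tendsto_nhds_iff).2
      (hx ▸ hPu)
  have hx0 : x = 0 := hT (by simpa using congrArg Prod.fst hx)
  have hx1 : ‖x‖ = 1 := tendsto_nhds_unique hux.norm (by simp [hu])
  simp [hx0] at hx1

end ContinuousLinearMap

theorem stmt_2_general {X Y Z : Type*}
    [NormedAddCommGroup X] [NormedSpace ℝ X] [CompleteSpace X]
    [NormedAddCommGroup Y] [NormedSpace ℝ Y] [CompleteSpace Y]
    [NormedAddCommGroup Z] [NormedSpace ℝ Z]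
    (T : X →L[ℝ] Y) (hT : Function.Injective T)
    (ι : X →L[ℝ] Z)
    (hι : ∀ s : Set X, Bornology.IsBounded s → IsCompact (closure (ι '' s)))
    (C₁ : ℝ)
    (hest : ∀ v : X, ‖v‖ ≤ C₁ * (‖T v‖ + ‖ι v‖))
    (D : Set Y) (hD : Dense D) (hDr : D ⊆ Set.range T) :
    Function.Bijective T ∧
      ∃ S : Y →L[ℝ] X, (∀ x : X, S (T x) = x) ∧ (∀ y : Y, T (S y) = y) := by
  have hιc : IsCompactOperator ι :=
    (isCompactOperator_iff_isCompact_closure_image_closedBall (ι : X →ₗ[ℝ] Z) one_pos).2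
      (hι _ isBounded_closedBall)
  obtain ⟨K, hK⟩ := T.exists_antilipschitzWith_of_isCompactOperator hT ι hιc
    (T.antilipschitzWith_prod_of_norm_le_mul_add ι hest)
  have hrange : (T : X →ₗ[ℝ] Y).range.topologicalClosure = ⊤ :=
    Submodule.dense_iff_topologicalClosure_eq_top.1 (hD.mono hDr)
  have hbij : Bijective T := T.bijective_iff_dense_range_and_antilipschitz.2 ⟨hrange, K, hK⟩
  refine ⟨hbij, (ContinuousLinearEquiv.ofBijective T (LinearMap.ker_eq_bot.2 hbij.1)
    (LinearMap.range_eq_top.2 hbij.2)).symm, fun x => ?_, fun y => ?_⟩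
  · exact ContinuousLinearEquiv.ofBijective_symm_apply_apply T _ _ x
  · exact ContinuousLinearEquiv.ofBijective_apply_symm_apply T _ _ y

/-- Let `T : X → Y` be an injective continuous linear map between real Banach
spaces, `ι : X → Z` a compact continuous linear map into a real normed space, with the
estimate `‖v‖ ≤ C₁ (‖T v‖ + ‖ι v‖)` for all `v` (`C₁ > 0`). If there is a dense subset
`D ⊆ Y` contained in the range of `T`, then `T` is bijective with a continuous linear
inverse. -/
theorem stmt_2 {X Y Z : Type*}
    [NormedAddCommGroup X] [NormedSpace ℝ X] [CompleteSpace X]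
    [NormedAddCommGroup Y] [NormedSpace ℝ Y] [CompleteSpace Y]
    [NormedAddCommGroup Z] [NormedSpace ℝ Z]
    (T : X →L[ℝ] Y) (hT : Function.Injective T)
    (ι : X →L[ℝ] Z)
    (hι : ∀ s : Set X, Bornology.IsBounded s → IsCompact (closure (ι '' s)))
    (C₁ : ℝ) (hC₁ : 0 < C₁)
    (hest : ∀ v : X, ‖v‖ ≤ C₁ * (‖T v‖ + ‖ι v‖))
    (D : Set Y) (hD : Dense D) (hDr : D ⊆ Set.range T) :
    Function.Bijective T ∧
      ∃ S : Y →L[ℝ] X, (∀ x : X, S (T x) = x) ∧ (∀ y : Y, T (S y) = y) :=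
  stmt_2_general T hT ι hι C₁ hest D hD hDr
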